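/- Let s ≥ t ≥ 2, n ≥ 2s + t − 1, and let F' = F_1 ∪ F_2 ∪ F_3 ∪ F_4 be the lantern construction. Then F' is induced K_{s,t}-free. -/

import Mathlib

open Finset

/-- A family of finite sets contains an induced copy of the complete bipartite
poset `K_{s,t}`: `s` pairwise incomparable "upper" sets and `t` pairwise
incomparable "lower" sets, each lower set strictly contained in each upper set. -/
def ContainsIndKst (s t : ℕ) (F : Finset (Finset ℕ)) : Prop :=
  ∃ (U : Fin s → Finset ℕ) (D : Fin t → Finset ℕ),
    (∀ i, U i ∈ F) ∧ (∀ j, D j ∈ F) ∧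
    (∀ i j, i ≠ j → ¬ U i ⊆ U j) ∧
    (∀ i j, i ≠ j → ¬ D i ⊆ D j) ∧
    (∀ i j, D j ⊂ U i)

/-- `F ⊆ 2^[n]` is induced `K_{s,t}`-saturated. -/
def IsIndKstSaturated (n s t : ℕ) (F : Finset (Finset ℕ)) : Prop :=
  (∀ A ∈ F, A ⊆ Finset.Icc 1 n) ∧
  ¬ ContainsIndKst s t F ∧
  ∀ G ⊆ Finset.Icc 1 n, G ∉ F → ContainsIndKst s t (insert G F)

/-- `sat*(n, K_{s,t})`: minimum size of an induced `K_{s,t}`-saturated family in `2^[n]`. -/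
noncomputable def satStarKst (n s t : ℕ) : ℕ :=
  sInf {m | ∃ F : Finset (Finset ℕ), IsIndKstSaturated n s t F ∧ F.card = m}

/-- `C` is a complete chain from `A` to `B`: totally ordered by inclusion,
with minimum `A`, maximum `B`, and `|C| = |B \ A| + 1`. -/
def IsCompleteChain (A B : Finset ℕ) (C : Finset (Finset ℕ)) : Prop :=
  A ∈ C ∧ B ∈ C ∧ (∀ X ∈ C, A ⊆ X ∧ X ⊆ B) ∧
  (∀ X ∈ C, ∀ Y ∈ C, X ⊆ Y ∨ Y ⊆ X) ∧
  C.card = (B \ A).card + 1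

/-- The first increment set of `L` (w.r.t. bottom `A`): the union of the sets in
`L` of size `|A| + 1`, minus `A`. -/
def firstIncrementSet (A : Finset ℕ) (L : Finset (Finset ℕ)) : Finset ℕ :=
  ((L.filter fun X => X.card = A.card + 1).sup id) \ A

/-- The last increment set of `L` (w.r.t. top `B`): `B` minus the intersection of
the sets in `L` of size `|B| - 1`. -/
def lastIncrementSet (B : Finset ℕ) (L : Finset (Finset ℕ)) : Finset ℕ :=
  B.filter fun x => ∃ X ∈ L, X.card = B.card - 1 ∧ x ∉ X

/-- `L` is a union of `k` pairwise internally disjoint complete chains from `A` to `B`. -/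
def IsLanternUnion (A B : Finset ℕ) (k : ℕ) (L : Finset (Finset ℕ)) : Prop :=
  ∃ C : Fin k → Finset (Finset ℕ),
    (∀ i, IsCompleteChain A B (C i)) ∧
    (∀ i j, i ≠ j → C i ∩ C j = {A, B}) ∧
    L = Finset.univ.biUnion C

/-- An upper `s`-lantern on `A`: a union of `s - 1` pairwise internally disjoint
complete chains from `A` to `A ∪ [s+t+1, n]` whose last increment set is
`[s+t+1, 2s+t-1]`. -/
def IsUpperLantern (n s t : ℕ) (A : Finset ℕ) (L : Finset (Finset ℕ)) : Prop :=
  IsLanternUnion A (A ∪ Finset.Icc (s+t+1) n) (s-1) L ∧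
  lastIncrementSet (A ∪ Finset.Icc (s+t+1) n) L = Finset.Icc (s+t+1) (2*s+t-1)

/-- A lower `t`-lantern on `A`: a union of `t - 1` pairwise internally disjoint
complete chains from `A` to `A ∪ [s+t+1, n]` whose first increment set is
`[s+t+1, s+2t-1]`. -/
def IsLowerLantern (n s t : ℕ) (A : Finset ℕ) (L : Finset (Finset ℕ)) : Prop :=
  IsLanternUnion A (A ∪ Finset.Icc (s+t+1) n) (t-1) L ∧
  firstIncrementSet A L = Finset.Icc (s+t+1) (s+2*t-1)

/-- `F₁ = {[n]} ∪ {[n] \ {x} : x ∈ [s+t-1]}`. -/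
def lanternF1 (n s t : ℕ) : Finset (Finset ℕ) :=
  insert (Finset.Icc 1 n) ((Finset.Icc 1 (s+t-1)).image fun x => (Finset.Icc 1 n).erase x)

/-- `F₂`: union over all `t`-element subsets `A` of `[s+t-1]` of the chosen upper lantern `Ls A`. -/
def lanternF2 (s t : ℕ) (Ls : Finset ℕ → Finset (Finset ℕ)) : Finset (Finset ℕ) :=
  (Finset.powersetCard t (Finset.Icc 1 (s+t-1))).biUnion Ls

/-- `F₃`: union over all `(t-1)`-element subsets `A` of `[s+t-1]` of the chosen
lower lantern `Lt (A ∪ {s+t})`. -/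
def lanternF3 (s t : ℕ) (Lt : Finset ℕ → Finset (Finset ℕ)) : Finset (Finset ℕ) :=
  (Finset.powersetCard (t-1) (Finset.Icc 1 (s+t-1))).biUnion fun A => Lt (insert (s+t) A)

/-- `F₄ = {∅} ∪ {{x} : x ∈ [s+t-1]}`. -/
def lanternF4 (s t : ℕ) : Finset (Finset ℕ) :=
  insert ∅ ((Finset.Icc 1 (s+t-1)).image fun x => ({x} : Finset ℕ))

/-- The lantern construction `F' = F₁ ∪ F₂ ∪ F₃ ∪ F₄`. -/
def lanternFam (n s t : ℕ) (Ls Lt : Finset ℕ → Finset (Finset ℕ)) : Finset (Finset ℕ) :=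
  lanternF1 n s t ∪ lanternF2 s t Ls ∪ lanternF3 s t Lt ∪ lanternF4 s t

/-!
A member of `F₂ ∪ F₃` lies in the lantern over a `t`-subset `B` of `[s+t]`, and since
`B ⊆ X ⊆ B ∪ [s+t+1, n]` it determines `B` as its trace on `[s+t]`. In an induced `K_{s,t}` the
upper sets are lantern members or co-singletons `[n] ∖ {x}` and the lower sets are lantern
members or singletons. Within one layer the two kinds cannot mix, as one contains the other, and
neither kind alone has room for the layer: a lantern is `s - 1` or `t - 1` chains, and there are
too few admissible points `x`.

If an upper set lies over `B`, so do all lower sets. When `s + t ∈ B` the lower layer overflows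
(`t - 1` chains, `t - 1` singletons inside `B`); otherwise `B` lies below every upper set and the
upper layer overflows (`s - 1` chains, `s - 1` points of `[s+t-1] ∖ B`). If all upper sets are
co-singletons, the `t` points of `[s+t]` they avoid form a base containing `s + t`, and the lower
layer overflows as before.
-/

section Antichain

variable {α ι : Type*} {f : ι → Finset α}

theorem injective_of_pairwise_not_subset {β : Type*} {g : β → Finset α} {x : ι → β}
    (hf : Pairwise fun i j => ¬ f i ⊆ f j) (hfx : ∀ i, f i = g (x i)) :
    Function.Injective x := fun i j e => by
  by_contra hne
  exact hf hne (by rw [hfx, hfx, e])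

theorem forall_or_forall_of_pairwise_not_subset (hf : Pairwise fun i j => ¬ f i ⊆ f j)
    {p q : Finset α → Prop} (hpq : ∀ X Y, p X → q Y → X ⊆ Y) (h : ∀ i, p (f i) ∨ q (f i)) :
    (∀ i, p (f i)) ∨ ∀ i, q (f i) := by
  by_contra! hne
  obtain ⟨⟨i, hi⟩, j, hj⟩ := hne
  have hpj := (h j).resolve_right hj
  have hji : j ≠ i := by rintro rfl; exact hi hpj
  exact hf hji (hpq _ _ hpj ((h i).resolve_left hi))

theorem card_le_of_pairwise_not_subset [Fintype ι] {β : Type*}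
    (hf : Pairwise fun i j => ¬ f i ⊆ f j) (g : β → Finset α) (S : Finset β)
    (hS : ∀ i, ∃ x ∈ S, f i = g x) : Fintype.card ι ≤ S.card := by
  choose x hxS hfx using hS
  have hx := injective_of_pairwise_not_subset hf hfx
  simpa using card_le_card_of_injOn (s := univ) x (fun i _ => hxS i) hx.injOn

theorem subset_of_pairwise_not_subset_singleton [Fintype ι]
    (hf : Pairwise fun i j => ¬ f i ⊆ f j) {S Y : Finset α} (hS : S.card ≤ Fintype.card ι)
    (hfS : ∀ i, ∃ x ∈ S, f i = {x}) (hY : ∀ i, f i ⊆ Y) : S ⊆ Y := by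
  classical
  choose x hxS hfx using hfS
  have hx := injective_of_pairwise_not_subset hf hfx
  have himage : univ.image x = S := eq_of_subset_of_card_le
    (fun y hy => by obtain ⟨i, -, rfl⟩ := mem_image.1 hy; exact hxS i)
    (by rwa [card_image_of_injective _ hx, card_univ])
  intro y hy
  obtain ⟨i, -, rfl⟩ := mem_image.1 (himage ▸ hy)
  exact hY i (by simp [hfx])

end Antichain

namespace IsLanternUnion

variable {A B X : Finset ℕ} {k : ℕ} {L : Finset (Finset ℕ)}

theorem subset_of_mem (hL : IsLanternUnion A B k L) (hX : X ∈ L) : A ⊆ X ∧ X ⊆ B := by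
  obtain ⟨C, hC, -, rfl⟩ := hL
  obtain ⟨i, -, hXi⟩ := mem_biUnion.1 hX
  exact (hC i).2.2.1 X hXi

theorem card_le {ι : Type*} [Fintype ι] (hL : IsLanternUnion A B k L) {f : ι → Finset ℕ}
    (hf : ∀ i, f i ∈ L) (hinc : Pairwise fun i j => ¬ f i ⊆ f j) : Fintype.card ι ≤ k := by
  obtain ⟨C, hC, -, rfl⟩ := hL
  choose c hc using fun i => by simpa using hf i
  simpa using Fintype.card_le_of_injective c fun i j hij => by
    by_contra hne
    rcases (hC (c i)).2.2.2.1 _ (hc i) _ (hij ▸ hc j) with h | h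
    exacts [hinc hne h, hinc (Ne.symm hne) h]

end IsLanternUnion

section Lantern

variable {n s t : ℕ} {B B' X Y : Finset ℕ} {Ls Lt : Finset ℕ → Finset (Finset ℕ)}

/-- `F₂ ∪ F₃` is the union of `lanternAt s t Ls Lt B` over the `t`-subsets `B` of `[s+t]`. -/
def lanternAt (s t : ℕ) (Ls Lt : Finset ℕ → Finset (Finset ℕ)) (B : Finset ℕ) :
    Finset (Finset ℕ) :=
  if s + t ∈ B then Lt B else Ls B

def IsLanternSystem (n s t : ℕ) (L : Finset ℕ → Finset (Finset ℕ)) : Prop :=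
  ∀ B ∈ powersetCard t (Icc 1 (s + t)),
    IsLanternUnion B (B ∪ Icc (s + t + 1) n) (if s + t ∈ B then t - 1 else s - 1) (L B)

theorem isLanternSystem_lanternAt
    (hLs : ∀ A ∈ powersetCard t (Icc 1 (s + t - 1)), IsUpperLantern n s t A (Ls A))
    (hLt : ∀ A ∈ powersetCard (t - 1) (Icc 1 (s + t - 1)),
      IsLowerLantern n s t (insert (s + t) A) (Lt (insert (s + t) A))) :
    IsLanternSystem n s t (lanternAt s t Ls Lt) := by
  intro B hB
  obtain ⟨hBQ, hBcard⟩ := mem_powersetCard.1 hB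
  unfold lanternAt
  split_ifs with hc
  · have hA : B.erase (s + t) ∈ powersetCard (t - 1) (Icc 1 (s + t - 1)) := by
      refine mem_powersetCard.2 ⟨fun y hy => ?_, by rw [card_erase_of_mem hc, hBcard]⟩
      have hyQ := hBQ (mem_of_mem_erase hy)
      have hyc := ne_of_mem_erase hy
      rw [mem_Icc] at hyQ ⊢
      omega
    simpa only [insert_erase hc] using (hLt _ hA).1
  · refine (hLs B (mem_powersetCard.2 ⟨fun y hy => ?_, hBcard⟩)).1
    have hyQ := hBQ hy
    have hyc : y ≠ s + t := fun h => hc (h ▸ hy)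
    rw [mem_Icc] at hyQ ⊢
    omega

theorem eq_of_subset_union_Icc (hB : B ∈ powersetCard t (Icc 1 (s + t)))
    (hB' : B' ∈ powersetCard t (Icc 1 (s + t))) (h : B' ⊆ B ∪ Icc (s + t + 1) n) : B' = B := by
  obtain ⟨-, hBc⟩ := mem_powersetCard.1 hB
  obtain ⟨hB'Q, hB'c⟩ := mem_powersetCard.1 hB'
  refine eq_of_subset_of_card_le (fun y hy => ?_) (by omega)
  have hyQ := hB'Q hy
  rw [mem_Icc] at hyQ
  exact (mem_union.1 (h hy)).resolve_right (by rw [mem_Icc]; omega)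

theorem mem_lanternFam (ht : 1 ≤ t) (hX : X ∈ lanternFam n s t Ls Lt) :
    X = Icc 1 n ∨ (∃ x ∈ Icc 1 (s + t - 1), X = (Icc 1 n).erase x) ∨
      (∃ B ∈ powersetCard t (Icc 1 (s + t)), X ∈ lanternAt s t Ls Lt B) ∨
      X = ∅ ∨ ∃ x ∈ Icc 1 (s + t - 1), X = {x} := by
  simp only [lanternFam, lanternF1, lanternF2, lanternF3, lanternF4, mem_union, mem_insert,
    mem_image, mem_biUnion, mem_powersetCard] at hX
  have hc : ∀ {A}, A ⊆ Icc 1 (s + t - 1) → s + t ∉ A := fun hAP h => by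
    have := hAP h
    rw [mem_Icc] at this
    omega
  rcases hX with (((rfl | ⟨x, hx, rfl⟩) | ⟨A, ⟨hAP, hA⟩, hXA⟩) | ⟨A, ⟨hAP, hA⟩, hXA⟩) | rfl |
    ⟨x, hx, rfl⟩
  · exact Or.inl rfl
  · exact Or.inr (Or.inl ⟨x, hx, rfl⟩)
  · refine Or.inr (Or.inr (Or.inl ⟨A, mem_powersetCard.2
      ⟨hAP.trans (Icc_subset_Icc_right (by omega)), hA⟩, ?_⟩))
    rwa [lanternAt, if_neg (hc hAP)]
  · refine Or.inr (Or.inr (Or.inl ⟨insert (s + t) A, mem_powersetCard.2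
      ⟨insert_subset (by rw [mem_Icc]; omega) (hAP.trans (Icc_subset_Icc_right (by omega))),
        by rw [card_insert_of_notMem (hc hAP)]; omega⟩, ?_⟩))
    rwa [lanternAt, if_pos (mem_insert_self _ _)]
  · exact Or.inr (Or.inr (Or.inr (Or.inl rfl)))
  · exact Or.inr (Or.inr (Or.inr (Or.inr ⟨x, hx, rfl⟩)))

theorem subset_Icc_of_mem_lanternFam (hL : IsLanternSystem n s t (lanternAt s t Ls Lt))
    (ht : 1 ≤ t) (hn : s + t ≤ n) (hX : X ∈ lanternFam n s t Ls Lt) : X ⊆ Icc 1 n := by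
  rcases mem_lanternFam ht hX with rfl | ⟨x, -, rfl⟩ | ⟨B, hB, hXB⟩ | rfl | ⟨x, hx, rfl⟩
  · exact Subset.rfl
  · exact erase_subset _ _
  · refine ((hL B hB).subset_of_mem hXB).2.trans (union_subset ?_ (Icc_subset_Icc_left (by omega)))
    exact (mem_powersetCard.1 hB).1.trans (Icc_subset_Icc_right hn)
  · exact empty_subset _
  · exact singleton_subset_iff.2 (Icc_subset_Icc_right (by omega) hx)

theorem eq_erase_or_mem_lanternAt (ht : 1 ≤ t) (hX : X ∈ lanternFam n s t Ls Lt) (hYX : Y ⊂ X)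
    (hY : Y.Nonempty) (hXn : X ≠ Icc 1 n) :
    (∃ x ∈ Icc 1 (s + t - 1), X = (Icc 1 n).erase x) ∨
      ∃ B ∈ powersetCard t (Icc 1 (s + t)), X ∈ lanternAt s t Ls Lt B := by
  rcases mem_lanternFam ht hX with h | h | h | rfl | ⟨x, -, rfl⟩
  · exact absurd h hXn
  · exact Or.inl h
  · exact Or.inr h
  · exact absurd hYX (not_ssubset_empty _)
  · exact absurd (ssubset_singleton_iff.1 hYX) hY.ne_empty

theorem mem_lanternAt_or_eq_singleton (ht : 1 ≤ t) (hY : Y ∈ lanternFam n s t Ls Lt)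
    (hYX : Y ⊂ X) (hXsub : X ⊆ Icc 1 n) (hXne : X ≠ Icc 1 n) (hYne : Y.Nonempty) :
    (∃ B ∈ powersetCard t (Icc 1 (s + t)), Y ∈ lanternAt s t Ls Lt B) ∨
      ∃ x ∈ Icc 1 (s + t - 1), Y = {x} := by
  rcases mem_lanternFam ht hY with rfl | ⟨x, -, rfl⟩ | h | rfl | h
  · exact absurd (hYX.trans_subset hXsub) (ssubset_irrefl _)
  · have := card_lt_card hYX
    have := pred_card_le_card_erase (s := Icc 1 n) (a := x)
    exact absurd (eq_of_subset_of_card_le hXsub (by omega)) hXne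
  · exact Or.inl h
  · exact absurd hYne not_nonempty_empty
  · exact Or.inr h

end Lantern

namespace IsLanternSystem

variable {n s t : ℕ} {L : Finset ℕ → Finset (Finset ℕ)} {B : Finset ℕ}

theorem lower_dichotomy {ι : Type*} (hL : IsLanternSystem n s t L)
    (hB : B ∈ powersetCard t (Icc 1 (s + t))) {D : ι → Finset ℕ}
    (hD : Pairwise fun i j => ¬ D i ⊆ D j)
    (hDkind : ∀ j, (∃ B' ∈ powersetCard t (Icc 1 (s + t)), D j ∈ L B') ∨
      ∃ x ∈ Icc 1 (s + t - 1), D j = {x})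
    (hDB : ∀ j, D j ⊆ B ∪ Icc (s + t + 1) n) :
    (∀ j, ∃ x ∈ B.erase (s + t), D j = {x}) ∨ ∀ j, D j ∈ L B := by
  refine forall_or_forall_of_pairwise_not_subset hD
    (p := fun X => ∃ x ∈ B.erase (s + t), X = {x}) (q := (· ∈ L B)) ?_ fun j => ?_
  · rintro _ Y ⟨x, hx, rfl⟩ hY
    exact singleton_subset_iff.2 (((hL B hB).subset_of_mem hY).1 (mem_of_mem_erase hx))
  rcases hDkind j with ⟨B', hB', hDB'⟩ | ⟨x, hx, hDx⟩
  · right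
    rwa [← eq_of_subset_union_Icc hB hB' (((hL B' hB').subset_of_mem hDB').1.trans (hDB j))]
  · left
    have hxB := hDB j (hDx ▸ mem_singleton_self x)
    rw [mem_Icc] at hx
    refine ⟨x, mem_erase.2 ⟨by omega, ?_⟩, hDx⟩
    exact (mem_union.1 hxB).resolve_right (by rw [mem_Icc]; omega)

theorem false_of_lower (hL : IsLanternSystem n s t L) (hB : B ∈ powersetCard t (Icc 1 (s + t)))
    (hc : s + t ∈ B) {D : Fin t → Finset ℕ} (hD : Pairwise fun i j => ¬ D i ⊆ D j)
    (hDkind : ∀ j, (∃ B' ∈ powersetCard t (Icc 1 (s + t)), D j ∈ L B') ∨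
      ∃ x ∈ Icc 1 (s + t - 1), D j = {x})
    (hDB : ∀ j, D j ⊆ B ∪ Icc (s + t + 1) n) : False := by
  have hBc := (mem_powersetCard.1 hB).2
  have ht : 0 < t := hBc ▸ card_pos.2 ⟨_, hc⟩
  rcases hL.lower_dichotomy hB hD hDkind hDB with h | h
  · have := card_le_of_pairwise_not_subset hD _ _ h
    rw [card_erase_of_mem hc, Fintype.card_fin] at this
    omega
  · have := (hL B hB).card_le h hD
    rw [if_pos hc, Fintype.card_fin] at this
    omega

theorem subset_of_lower (hL : IsLanternSystem n s t L) (ht : 0 < t)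
    (hB : B ∈ powersetCard t (Icc 1 (s + t))) (hc : s + t ∉ B) {D : Fin t → Finset ℕ}
    (hD : Pairwise fun i j => ¬ D i ⊆ D j)
    (hDkind : ∀ j, (∃ B' ∈ powersetCard t (Icc 1 (s + t)), D j ∈ L B') ∨
      ∃ x ∈ Icc 1 (s + t - 1), D j = {x})
    (hDB : ∀ j, D j ⊆ B ∪ Icc (s + t + 1) n) {Y : Finset ℕ} (hY : ∀ j, D j ⊆ Y) : B ⊆ Y := by
  rcases hL.lower_dichotomy hB hD hDkind hDB with h | h
  · rw [erase_eq_of_notMem hc] at h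
    exact subset_of_pairwise_not_subset_singleton hD (by simp [(mem_powersetCard.1 hB).2]) h hY
  · exact ((hL B hB).subset_of_mem (h ⟨0, ht⟩)).1.trans (hY _)

theorem upper_dichotomy {ι : Type*} (hL : IsLanternSystem n s t L) (hn : s + t ≤ n)
    (hB : B ∈ powersetCard t (Icc 1 (s + t))) {U : ι → Finset ℕ}
    (hU : Pairwise fun i j => ¬ U i ⊆ U j)
    (hUkind : ∀ i, (∃ x ∈ Icc 1 (s + t - 1), U i = (Icc 1 n).erase x) ∨
      ∃ B' ∈ powersetCard t (Icc 1 (s + t)), U i ∈ L B')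
    (hBU : ∀ i, B ⊆ U i) :
    (∀ i, U i ∈ L B) ∨ ∀ i, ∃ x ∈ Icc 1 (s + t - 1) \ B, U i = (Icc 1 n).erase x := by
  refine forall_or_forall_of_pairwise_not_subset hU (p := (· ∈ L B))
    (q := fun X => ∃ x ∈ Icc 1 (s + t - 1) \ B, X = (Icc 1 n).erase x) ?_ fun i => ?_
  · rintro X _ hX ⟨x, hx, rfl⟩ y hy
    rw [mem_sdiff, mem_Icc] at hx
    rw [mem_erase, mem_Icc]
    rcases mem_union.1 (((hL B hB).subset_of_mem hX).2 hy) with hyB | hyT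
    · have hyQ := (mem_powersetCard.1 hB).1 hyB
      rw [mem_Icc] at hyQ
      exact ⟨fun h => hx.2 (h ▸ hyB), by omega, by omega⟩
    · rw [mem_Icc] at hyT
      exact ⟨by omega, by omega, hyT.2⟩
  rcases hUkind i with ⟨x, hx, hUx⟩ | ⟨B', hB', hUB'⟩
  · refine Or.inr ⟨x, mem_sdiff.2 ⟨hx, fun hxB => ?_⟩, hUx⟩
    simpa [hUx] using hBU i hxB
  · left
    rwa [eq_of_subset_union_Icc hB' hB ((hBU i).trans ((hL B' hB').subset_of_mem hUB').2)]

theorem false_of_upper (hL : IsLanternSystem n s t L) (hs : 0 < s) (hn : s + t ≤ n)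
    (hB : B ∈ powersetCard t (Icc 1 (s + t))) (hc : s + t ∉ B) {U : Fin s → Finset ℕ}
    (hU : Pairwise fun i j => ¬ U i ⊆ U j)
    (hUkind : ∀ i, (∃ x ∈ Icc 1 (s + t - 1), U i = (Icc 1 n).erase x) ∨
      ∃ B' ∈ powersetCard t (Icc 1 (s + t)), U i ∈ L B')
    (hBU : ∀ i, B ⊆ U i) : False := by
  obtain ⟨hBQ, hBc⟩ := mem_powersetCard.1 hB
  have hBP : B ⊆ Icc 1 (s + t - 1) := fun y hy => by
    have hyQ := hBQ hy
    have hyc : y ≠ s + t := fun h => hc (h ▸ hy)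
    rw [mem_Icc] at hyQ ⊢
    omega
  rcases hL.upper_dichotomy hn hB hU hUkind hBU with h | h
  · have := (hL B hB).card_le h hU
    rw [if_neg hc, Fintype.card_fin] at this
    omega
  · have := card_le_of_pairwise_not_subset hU _ _ h
    rw [card_sdiff_of_subset hBP, Nat.card_Icc, hBc, Fintype.card_fin] at this
    omega

end IsLanternSystem

theorem exists_base_of_eq_erase {n s t : ℕ} (hs : 0 < s) {U : Fin s → Finset ℕ}
    (hU : Pairwise fun i j => ¬ U i ⊆ U j) {x : Fin s → ℕ}
    (hx : ∀ i, x i ∈ Icc 1 (s + t - 1)) (hUx : ∀ i, U i = (Icc 1 n).erase (x i)) :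
    ∃ B ∈ powersetCard t (Icc 1 (s + t)), s + t ∈ B ∧
      ∀ Y, (∀ i, Y ⊆ U i) → Y ⊆ B ∪ Icc (s + t + 1) n := by
  have hxinj := injective_of_pairwise_not_subset hU hUx
  have hXP : univ.image x ⊆ Icc 1 (s + t - 1) := fun y hy => by
    obtain ⟨i, -, rfl⟩ := mem_image.1 hy
    exact hx i
  have hcX : s + t ∉ univ.image x := fun h => by
    have := hXP h
    rw [mem_Icc] at this
    omega
  refine ⟨Icc 1 (s + t) \ univ.image x, mem_powersetCard.2 ⟨sdiff_subset, ?_⟩,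
    mem_sdiff.2 ⟨by rw [mem_Icc]; omega, hcX⟩, fun Y hY y hy => ?_⟩
  · rw [card_sdiff_of_subset (hXP.trans (Icc_subset_Icc_right (by omega))),
      card_image_of_injective _ hxinj, card_univ, Fintype.card_fin, Nat.card_Icc]
    omega
  · have hyN := hY ⟨0, hs⟩ hy
    rw [hUx, mem_erase, mem_Icc] at hyN
    have hyX : y ∉ univ.image x := fun h => by
      obtain ⟨i, -, rfl⟩ := mem_image.1 h
      simpa [hUx] using hY i hy
    rw [mem_union, mem_sdiff, mem_Icc, mem_Icc]
    by_cases hyQ : y ≤ s + t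
    · exact Or.inl ⟨⟨hyN.2.1, hyQ⟩, hyX⟩
    · exact Or.inr ⟨by omega, hyN.2.2⟩

/-- the lantern construction `F'` is induced `K_{s,t}`-free. -/
theorem stmt7
    (n s t : ℕ) (hts : t ≤ s) (ht : 2 ≤ t) (hn : 2*s + t - 1 ≤ n)
    (Ls Lt : Finset ℕ → Finset (Finset ℕ))
    (hLs : ∀ A ∈ Finset.powersetCard t (Finset.Icc 1 (s+t-1)),
      IsUpperLantern n s t A (Ls A))
    (hLt : ∀ A ∈ Finset.powersetCard (t-1) (Finset.Icc 1 (s+t-1)),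
      IsLowerLantern n s t (insert (s+t) A) (Lt (insert (s+t) A)))
    : ¬ ContainsIndKst s t (lanternFam n s t Ls Lt) := by
  rintro ⟨U, D, hUF, hDF, hUinc, hDinc, hDU⟩
  have hL := isLanternSystem_lanternAt hLs hLt
  have : Nontrivial (Fin s) := Fin.nontrivial_iff_two_le.2 (ht.trans hts)
  have : Nontrivial (Fin t) := Fin.nontrivial_iff_two_le.2 ht
  have hUn : ∀ i, U i ⊆ Icc 1 n := fun i =>
    subset_Icc_of_mem_lanternFam hL (by omega) (by omega) (hUF i)
  have hUn' : ∀ i, U i ≠ Icc 1 n := fun i he => by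
    obtain ⟨j, hj⟩ := exists_ne i
    exact hUinc _ _ hj (he ▸ hUn j)
  have hDne : ∀ j, (D j).Nonempty := fun j => nonempty_iff_ne_empty.2 fun he => by
    obtain ⟨k, hk⟩ := exists_ne j
    exact hDinc _ _ hk.symm (he ▸ empty_subset _)
  obtain ⟨i₀⟩ : Nonempty (Fin s) := inferInstance
  obtain ⟨j₀⟩ : Nonempty (Fin t) := inferInstance
  have hU := fun i => eq_erase_or_mem_lanternAt (by omega) (hUF i) (hDU i j₀) (hDne j₀) (hUn' i)
  have hD := fun j => mem_lanternAt_or_eq_singleton (by omega) (hDF j) (hDU i₀ j) (hUn i₀)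
    (hUn' i₀) (hDne j)
  by_cases h : ∃ i, ∃ B ∈ powersetCard t (Icc 1 (s + t)), U i ∈ lanternAt s t Ls Lt B
  · obtain ⟨i, B, hB, hUB⟩ := h
    have hDB := fun j => (hDU i j).subset.trans ((hL B hB).subset_of_mem hUB).2
    by_cases hc : s + t ∈ B
    · exact hL.false_of_lower hB hc hDinc hD hDB
    · exact hL.false_of_upper (by omega) (by omega) hB hc hUinc hU fun i =>
        hL.subset_of_lower (by omega) hB hc hDinc hD hDB fun j => (hDU i j).subset
  · choose x hx hUx using fun i => (hU i).resolve_right fun h' => h ⟨i, h'⟩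
    obtain ⟨B, hB, hc, hDB⟩ := exists_base_of_eq_erase (by omega) hUinc hx hUx
    exact hL.false_of_lower hB hc hDinc hD fun j => hDB _ fun i => (hDU i j).subset
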